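/- Every zigzag path b of length n ≥ 1 factors as b = zₙ ∘ ρ, where zₙ : [0,1] → [0,1] is the standard piecewise-affine zigzag of length n (zₙ is affine on each interval [(i−1)/n, i/n] with zₙ((i−1)/n) and zₙ(i/n) equal alternately to 0 and 1, starting with zₙ(0) = 0), and ρ : [0,1] → [0,1] is a continuous nondecreasing surjection with ρ(0) = 0 and ρ(1) = 1. (Every controlled path of c𝕀∼ is a global reparametrisation of a standard concatenation of the generators î and r.) -/

import Mathlib

open Set

/-- A continuous map `b : [0,1] → [0,1]` is a *zigzag path of length `n`* (see Context). -/
def IsZigzag (b : ℝ → ℝ) (n : ℕ) : Prop :=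
  ContinuousOn b (Icc 0 1) ∧ (∀ t ∈ Icc (0:ℝ) 1, b t ∈ Icc (0:ℝ) 1) ∧
  ((n = 0 ∧ ∀ t ∈ Icc (0:ℝ) 1, b t = 0) ∨
   (1 ≤ n ∧ ∃ t : ℕ → ℝ, t 0 = 0 ∧ t n = 1 ∧
     (∀ i < n, t i < t (i + 1)) ∧
     (∀ i ≤ n, b (t i) = if Odd i then 1 else 0) ∧
     (∀ i, 1 ≤ i → i ≤ n →
       if Odd i then MonotoneOn b (Icc (t (i - 1)) (t i))
       else AntitoneOn b (Icc (t (i - 1)) (t i)))))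

/-- The standard piecewise-affine zigzag of length `n`: it is affine on each interval
`[(i-1)/n, i/n]`, with values at the points `i/n` equal alternately to `0` and `1`,
starting with `0` at `0`. (Concretely, the triangle wave `y ↦ 1 - |1 - (y mod 2)|`
evaluated at `y = n * x`.) -/
noncomputable def stdZigzag (n : ℕ) (x : ℝ) : ℝ :=
  1 - |1 - ((n : ℝ) * x - 2 * ⌊((n : ℝ) * x) / 2⌋)|

/-!
On the `j`-th leg `[t j, t (j + 1)]` the path moves monotonically from `0` to `1` (for even `j`)
or from `1` to `0` (for odd `j`), and `zₙ` runs through `[j/n, (j+1)/n]` affinely in the same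
way; so on that leg `ρ` has to be `(j + b s) / n`, resp. `(j + 1 - b s) / n`. Taking `ρ` to be
the average of the `n` legs, each turned upright and extended constantly outside its interval,
makes it continuous and nondecreasing at once.
-/

lemma stdZigzag_of_mul_eq {n : ℕ} {x v : ℝ} (m : ℤ) (hx : n * x = 2 * m + v)
    (hv : v ∈ Icc (0 : ℝ) 2) : stdZigzag n x = 1 - |1 - v| := by
  unfold stdZigzag
  rw [hx]
  rcases hv.2.lt_or_eq with hv2 | rfl
  · have hfloor : ⌊(2 * m + v) / 2⌋ = m := by
      rw [Int.floor_eq_iff]; constructor <;> linarith [hv.1]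
    rw [hfloor]; ring_nf
  · have hfloor : ⌊(2 * m + 2 : ℝ) / 2⌋ = m + 1 := by
      rw [Int.floor_eq_iff]; push_cast; constructor <;> linarith
    rw [hfloor, show (2 * m + 2 : ℝ) - 2 * ((m + 1 : ℤ) : ℝ) = 0 by push_cast; ring]
    norm_num

lemma stdZigzag_natCast_add_div {n : ℕ} (hn : 0 < n) (j : ℕ) {u : ℝ}
    (hu : u ∈ Icc (0 : ℝ) 1) :
    stdZigzag n ((j + u) / n) = if Even j then u else 1 - u := by
  have hx : (n : ℝ) * ((j + u) / n) = j + u := by field_simp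
  rcases Nat.even_or_odd' j with ⟨m, rfl | rfl⟩
  · rw [stdZigzag_of_mul_eq m (by rw [hx]; push_cast; ring) ⟨hu.1, by linarith [hu.2]⟩,
      if_pos (even_two_mul m), abs_of_nonneg (by linarith [hu.2])]
    ring
  · rw [stdZigzag_of_mul_eq m (v := 1 + u) (by rw [hx]; push_cast; ring)
      ⟨by linarith [hu.1], by linarith [hu.2]⟩, if_neg (Nat.not_even_two_mul_add_one m),
      show 1 - (1 + u) = -u by ring, abs_neg, abs_of_nonneg hu.1]

lemma exists_lt_mem_Icc_succ {X : Type*} [LinearOrder X] {t : ℕ → X} {n : ℕ} (hn : 0 < n)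
    (ht : ∀ j < n, t j ≤ t (j + 1)) {s : X} (hs : s ∈ Icc (t 0) (t n)) :
    ∃ j < n, s ∈ Icc (t j) (t (j + 1)) := by
  rcases hs.1.eq_or_lt with rfl | hlt
  · exact ⟨0, hn, left_mem_Icc.2 (ht 0 hn)⟩
  · obtain ⟨j, hj, hsj⟩ := mem_iUnion₂.1 (Ioc_subset_biUnion_Ioc n t ⟨hlt, hs.2⟩)
    exact ⟨j, Finset.mem_range.1 hj, Ioc_subset_Icc_self hsj⟩

lemma Finset.sum_range_eq_natCast_add {M : Type*} [AddCommMonoidWithOne M] {f : ℕ → M}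
    {j n : ℕ} (hj : j < n) (hlt : ∀ k < j, f k = 1) (hgt : ∀ k, j < k → k < n → f k = 0) :
    ∑ k ∈ range n, f k = j + f j := by
  obtain ⟨m, rfl⟩ := Nat.exists_eq_add_of_le hj
  rw [sum_range_add, sum_range_succ, sum_congr rfl fun k hk => hlt k (mem_range.1 hk),
    sum_congr rfl fun k hk => hgt _ (by omega) (by simp at hk; omega)]
  simp

/-- The `j`-th leg of a zigzag path, reflected for odd `j` so that it rises from `0` to `1`. -/
noncomputable def zigzagLeg (b : ℝ → ℝ) (j : ℕ) (s : ℝ) : ℝ :=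
  if Even j then b s else 1 - b s

noncomputable def zigzagReparam (b : ℝ → ℝ) (t : ℕ → ℝ) (n : ℕ) (s : ℝ) : ℝ :=
  (∑ j ∈ Finset.range n, zigzagLeg b j (max (t j) (min (t (j + 1)) s))) / n

section Reparam

variable {b : ℝ → ℝ} {t : ℕ → ℝ} {n j : ℕ} {s : ℝ}

lemma zigzagLeg_mem_Icc (hb : b s ∈ Icc (0 : ℝ) 1) : zigzagLeg b j s ∈ Icc (0 : ℝ) 1 := by
  unfold zigzagLeg
  split_ifs <;> constructor <;> linarith [hb.1, hb.2]

lemma zigzagLeg_of_eq_left (h : b s = if Odd j then 1 else 0) : zigzagLeg b j s = 0 := by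
  rcases Nat.even_or_odd j with hj | hj
  · simp [zigzagLeg, hj, h, Nat.not_odd_iff_even.2 hj]
  · simp [zigzagLeg, hj, h, Nat.not_even_iff_odd.2 hj]

lemma zigzagLeg_of_eq_right (h : b s = if Odd (j + 1) then 1 else 0) : zigzagLeg b j s = 1 := by
  rcases Nat.even_or_odd j with hj | hj
  · simp [zigzagLeg, hj, h, hj.add_one]
  · simp [zigzagLeg, h, Nat.not_even_iff_odd.2 hj, Nat.not_odd_iff_even.2 hj.add_one]

lemma monotoneOn_zigzagLeg {S : Set ℝ}
    (h : if Odd (j + 1) then MonotoneOn b S else AntitoneOn b S) :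
    MonotoneOn (zigzagLeg b j) S := by
  unfold zigzagLeg
  rcases Nat.even_or_odd j with hj | hj
  · simpa [hj, hj.add_one] using h
  · simp only [Nat.not_even_iff_odd.2 hj, Nat.not_odd_iff_even.2 hj.add_one, if_false] at h ⊢
    intro x hx y hy hxy
    linarith [h hx hy hxy]

lemma stdZigzag_natCast_add_zigzagLeg_div (hn : 0 < n) (hb : b s ∈ Icc (0 : ℝ) 1) :
    stdZigzag n ((j + zigzagLeg b j s) / n) = b s := by
  rw [stdZigzag_natCast_add_div hn j (zigzagLeg_mem_Icc hb), zigzagLeg]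
  split_ifs <;> ring

lemma monotone_zigzagReparam (ht : ∀ j < n, t j ≤ t (j + 1))
    (hb : ∀ j < n, MonotoneOn (zigzagLeg b j) (Icc (t j) (t (j + 1)))) :
    Monotone (zigzagReparam b t n) := by
  intro x y hxy
  unfold zigzagReparam
  gcongr with j hj
  have hj := Finset.mem_range.1 hj
  exact hb j hj ⟨le_max_left _ _, max_le (ht j hj) (min_le_left _ _)⟩
    ⟨le_max_left _ _, max_le (ht j hj) (min_le_left _ _)⟩ (by gcongr)

lemma continuous_zigzagReparam (ht : ∀ j < n, t j ≤ t (j + 1))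
    (hb : ∀ j < n, ContinuousOn b (Icc (t j) (t (j + 1)))) :
    Continuous (zigzagReparam b t n) := by
  refine (continuous_finsetSum _ fun j hj => ?_).div_const _
  have hj := Finset.mem_range.1 hj
  have hleg : ContinuousOn (zigzagLeg b j) (Icc (t j) (t (j + 1))) := by
    unfold zigzagLeg
    split_ifs
    exacts [hb j hj, continuousOn_const.sub (hb j hj)]
  exact hleg.comp_continuous (continuous_const.max (continuous_const.min continuous_id))
    fun s => ⟨le_max_left _ _, max_le (ht j hj) (min_le_left _ _)⟩

lemma zigzagReparam_eq_of_mem_Icc (ht : MonotoneOn t (Iic n))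
    (hval : ∀ i ≤ n, b (t i) = if Odd i then 1 else 0) (hj : j < n)
    (hs : s ∈ Icc (t j) (t (j + 1))) :
    zigzagReparam b t n s = (j + zigzagLeg b j s) / n := by
  have htle : ∀ {i k}, i ≤ k → k ≤ n → t i ≤ t k := fun hik hk =>
    ht (mem_Iic.2 (hik.trans hk)) (mem_Iic.2 hk) hik
  unfold zigzagReparam
  rw [Finset.sum_range_eq_natCast_add hj, min_eq_right hs.2, max_eq_right hs.1]
  · intro k hk
    have hs' : t (k + 1) ≤ s := (htle hk (by omega)).trans hs.1
    rw [min_eq_left hs', max_eq_right (htle (Nat.le_succ k) (by omega))]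
    exact zigzagLeg_of_eq_right (hval (k + 1) (by omega))
  · intro k hjk hk
    have hs' : s ≤ t k := hs.2.trans (htle hjk hk.le)
    rw [min_eq_right (hs'.trans (htle (Nat.le_succ k) hk)), max_eq_left hs']
    exact zigzagLeg_of_eq_left (hval k hk.le)

lemma zigzagReparam_apply_zero (ht : MonotoneOn t (Iic n))
    (hval : ∀ i ≤ n, b (t i) = if Odd i then 1 else 0) (hn : 0 < n) :
    zigzagReparam b t n (t 0) = 0 := by
  rw [zigzagReparam_eq_of_mem_Icc ht hval hn (left_mem_Icc.2 (ht (by simp) (by simpa) zero_le_one)),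
    zigzagLeg_of_eq_left (hval 0 (Nat.zero_le _))]
  simp

lemma zigzagReparam_apply_last (ht : MonotoneOn t (Iic n))
    (hval : ∀ i ≤ n, b (t i) = if Odd i then 1 else 0) (hn : 0 < n) :
    zigzagReparam b t n (t n) = 1 := by
  obtain ⟨m, rfl⟩ := Nat.exists_eq_add_one_of_ne_zero hn.ne'
  rw [zigzagReparam_eq_of_mem_Icc ht hval (Nat.lt_succ_self m)
      (right_mem_Icc.2 (ht (by simp) (by simp) (Nat.le_succ m))),
    zigzagLeg_of_eq_right (hval _ le_rfl), Nat.cast_add_one]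
  exact div_self (Nat.cast_add_one_ne_zero m)

end Reparam

theorem zigzag_factor_stdZigzag (b : ℝ → ℝ) (n : ℕ) (hb : IsZigzag b n) :
    ∃ ρ : ℝ → ℝ, ContinuousOn ρ (Icc 0 1) ∧ MonotoneOn ρ (Icc 0 1) ∧
      ρ '' Icc 0 1 = Icc 0 1 ∧ ρ 0 = 0 ∧ ρ 1 = 1 ∧
      ∀ s ∈ Icc (0:ℝ) 1, b s = stdZigzag n (ρ s) := by
  obtain ⟨hbc, hbI, ⟨rfl, hb0⟩ | ⟨hn, t, ht0, htn, htlt, hval, hmono⟩⟩ := hb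
  · exact ⟨id, continuousOn_id, monotoneOn_id, image_id _, rfl, rfl,
      fun s hs => by simp [stdZigzag, hb0 s hs]⟩
  have ht : MonotoneOn t (Iic n) := (strictMonoOn_Iic_of_lt_succ htlt).monotoneOn
  have hstep : ∀ j < n, t j ≤ t (j + 1) := fun j hj => (htlt j hj).le
  have hlegs : ∀ j < n, Icc (t j) (t (j + 1)) ⊆ Icc 0 1 := fun j hj =>
    ht0 ▸ htn ▸ Icc_subset_Icc (ht (by simp) (by simp; omega) (Nat.zero_le _))
      (ht (by simp; omega) (by simp) hj)
  have hρmono := monotone_zigzagReparam hstep fun j hj =>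
    monotoneOn_zigzagLeg (by simpa using hmono (j + 1) (by omega) hj)
  have hρcont := continuous_zigzagReparam hstep fun j hj => hbc.mono (hlegs j hj)
  have hρ0 : zigzagReparam b t n 0 = 0 := ht0 ▸ zigzagReparam_apply_zero ht hval hn
  have hρ1 : zigzagReparam b t n 1 = 1 := htn ▸ zigzagReparam_apply_last ht hval hn
  refine ⟨zigzagReparam b t n, hρcont.continuousOn, hρmono.monotoneOn _, ?_, hρ0, hρ1,
    fun s hs => ?_⟩
  · rw [hρcont.continuousOn.image_Icc_of_monotoneOn zero_le_one (hρmono.monotoneOn _), hρ0,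
      hρ1]
  · obtain ⟨j, hj, hsj⟩ := exists_lt_mem_Icc_succ hn hstep (ht0 ▸ htn ▸ hs)
    rw [zigzagReparam_eq_of_mem_Icc ht hval hj hsj,
      stdZigzag_natCast_add_zigzagLeg_div hn (hbI s hs)]
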